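/- arXiv:1704.03160 — 2 statements merged into one kernel-verified Lean document; each statement's English description precedes it below -/
import Mathlib

section
/- No TSS admits well-supported proofs of two closed literals that deny each other; that is, it is never the case that both P ⊢_ws (p →a q) for some q and P ⊢_ws (p ↛a). -/
open Classical
attribute [local instance] Classical.propDecidable

universe u

/-- Terms with recursion over a signature: function symbols `F` with arities `ar`. -/
inductive Tm (Var F : Type) (ar : F → ℕ) : Type where
  | var : Var → Tm Var F ar
  | app : (f : F) → (Fin (ar f) → Tm Var F ar) → Tm Var F ar
  | rcs : (V : Set Var) → (Var → Tm Var F ar) → Var → Tm Var F ar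

variable {Var A F : Type} {ar : F → ℕ}

/-- Free variables of a term. -/
noncomputable def Tm.fv : Tm Var F ar → Set Var
  | .var x => {x}
  | .app _ ts => ⋃ i, (ts i).fv
  | .rcs V S _ => (⋃ Y ∈ V, (S Y).fv) \ V

def Tm.Closed (t : Tm Var F ar) : Prop := t.fv = ∅

/-- Substitution (intended for closed substitutions; bound variables are skipped). -/
noncomputable def Tm.subst (ρ : Var → Tm Var F ar) : Tm Var F ar → Tm Var F ar
  | .var x => ρ x
  | .app f ts => .app f (fun i => (ts i).subst ρ)
  | .rcs V S X => .rcs V (fun Y => (S Y).subst (fun z => if z ∈ V then .var z else ρ z)) X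

/-- Positive and negative literals. -/
inductive Lit (Var A F : Type) (ar : F → ℕ) : Type where
  | pos : Tm Var F ar → A → Tm Var F ar → Lit Var A F ar
  | neg : Tm Var F ar → A → Lit Var A F ar

def Lit.ClosedPos : Lit Var A F ar → Prop
  | .pos t _ u => t.Closed ∧ u.Closed
  | .neg _ _ => False

def Lit.ClosedNeg : Lit Var A F ar → Prop
  | .pos _ _ _ => False
  | .neg t _ => t.Closed

def Lit.Closed (l : Lit Var A F ar) : Prop := l.ClosedPos ∨ l.ClosedNeg

/-- Two literals deny each other. -/
def Lit.deny : Lit Var A F ar → Lit Var A F ar → Prop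
  | .pos t a _, .neg u b => t = u ∧ a = b
  | .neg u b, .pos t a _ => t = u ∧ a = b
  | _, _ => False

noncomputable def Lit.subst (σ : Var → Tm Var F ar) : Lit Var A F ar → Lit Var A F ar
  | .pos t a u => .pos (t.subst σ) a (u.subst σ)
  | .neg t a => .neg (t.subst σ) a

/-- A transition rule: premises and a positive conclusion. -/
structure Rule (Var A F : Type) (ar : F → ℕ) : Type where
  prem : Set (Lit Var A F ar)
  src : Tm Var F ar
  act : A
  tgt : Tm Var F ar

def Rule.concl (r : Rule Var A F ar) : Lit Var A F ar := .pos r.src r.act r.tgt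

/-- A transition system specification. -/
structure TSS (Var A F : Type) (ar : F → ℕ) : Type where
  rules : Set (Rule Var A F ar)

/-- Provability of a transition rule `H/α` from a TSS. -/
inductive Proves (P : TSS Var A F ar) : Set (Lit Var A F ar) → Lit Var A F ar → Prop where
  | hyp {H : Set (Lit Var A F ar)} {α : Lit Var A F ar} : α ∈ H → Proves P H α
  | rule {H : Set (Lit Var A F ar)} (r : Rule Var A F ar) (σ : Var → Tm Var F ar) :
      r ∈ P.rules → (∀ β ∈ r.prem, Proves P H (β.subst σ)) →
      Proves P H (Lit.pos (r.src.subst σ) r.act (r.tgt.subst σ))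

/-- The underapproximations `CT⁺_λ` of the well-founded semantics, by transfinite recursion. -/
noncomputable def CTp (P : TSS Var A F ar) (l : Ordinal) : Set (Lit Var A F ar) :=
  {β | β.ClosedPos ∧ Proves P
    {δ | δ.ClosedNeg ∧ ∀ γ,
        (γ.ClosedPos ∧ Proves P
          {δ' | δ'.ClosedNeg ∧ ∀ κ, κ < l → ∀ γ' ∈ CTp P κ, ¬ Lit.deny δ' γ'} γ) →
        ¬ Lit.deny δ γ} β}
termination_by l

/-- `PT⁻_λ`: closed negative literals not denying any literal in `CT⁺_κ`, `κ < λ`. -/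
noncomputable def PTm (P : TSS Var A F ar) (l : Ordinal) : Set (Lit Var A F ar) :=
  {δ | δ.ClosedNeg ∧ ∀ κ, κ < l → ∀ γ ∈ CTp P κ, ¬ Lit.deny δ γ}

/-- `PT⁺_λ`: closed positive literals provable under hypotheses `PT⁻_λ`. -/
noncomputable def PTp (P : TSS Var A F ar) (l : Ordinal) : Set (Lit Var A F ar) :=
  {β | β.ClosedPos ∧ Proves P (PTm P l) β}

/-- `CT⁻_λ`: closed negative literals not denying any literal in `PT⁺_λ`. -/
noncomputable def CTm (P : TSS Var A F ar) (l : Ordinal) : Set (Lit Var A F ar) :=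
  {δ | δ.ClosedNeg ∧ ∀ γ ∈ PTp P l, ¬ Lit.deny δ γ}

/-- A closure ordinal for the approximation sequences. -/
def IsClosureOrdinal (P : TSS Var A F ar) (κ : Ordinal) : Prop :=
  ∀ l, κ < l → PTm P l = PTm P κ ∧ PTp P l = PTp P κ ∧ CTm P l = CTm P κ ∧ CTp P l = CTp P κ

/-- The stabilized sets of the well-founded semantics. -/
noncomputable def ctPos (P : TSS Var A F ar) : Set (Lit Var A F ar) := ⋃ l : Ordinal.{0}, CTp P l
noncomputable def ptPos (P : TSS Var A F ar) : Set (Lit Var A F ar) := ⋂ l : Ordinal.{0}, PTp P l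
noncomputable def ctNeg (P : TSS Var A F ar) : Set (Lit Var A F ar) := ⋃ l : Ordinal.{0}, CTm P l
noncomputable def ptNeg (P : TSS Var A F ar) : Set (Lit Var A F ar) := ⋂ l : Ordinal.{0}, PTm P l

/-- Certain transitions `p →a q`. -/
noncomputable def ctr (P : TSS Var A F ar) (p : Tm Var F ar) (a : A) (q : Tm Var F ar) : Prop :=
  Lit.pos p a q ∈ ctPos P

/-- Possible transitions `p ⇢a q`. -/
noncomputable def ptr (P : TSS Var A F ar) (p : Tm Var F ar) (a : A) (q : Tm Var F ar) : Prop :=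
  Lit.pos p a q ∈ ptPos P

/-- Well-supported provability of a closed literal. -/
inductive WS (P : TSS Var A F ar) : Lit Var A F ar → Prop where
  | pos (r : Rule Var A F ar) (σ : Var → Tm Var F ar) :
      r ∈ P.rules →
      (Lit.pos (r.src.subst σ) r.act (r.tgt.subst σ)).ClosedPos →
      (∀ β ∈ r.prem, (β.subst σ).Closed) →
      (∀ β ∈ r.prem, WS P (β.subst σ)) →
      WS P (Lit.pos (r.src.subst σ) r.act (r.tgt.subst σ))
  | neg (t : Tm Var F ar) (a : A) (K : Set (Lit Var A F ar)) :
      t.Closed →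
      (∀ β ∈ K, β.Closed) →
      (∀ β ∈ K, WS P β) →
      (∀ N : Set (Lit Var A F ar), (∀ δ ∈ N, δ.ClosedNeg) →
        ∀ γ : Lit Var A F ar, γ.ClosedPos → Lit.deny γ (Lit.neg t a) → Proves P N γ →
        ∃ β ∈ K, ∃ δ ∈ N, Lit.deny β δ) →
      WS P (Lit.neg t a)

/-- A (modal) bisimulation on the 3-valued transition system of `P`. -/
noncomputable def IsBisim (P : TSS Var A F ar) (R : Tm Var F ar → Tm Var F ar → Prop) : Prop :=
  ∀ p q, R p q →
    (∀ a p', ctr P p a p' → ∃ q', ctr P q a q' ∧ R p' q') ∧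
    (∀ a q', ptr P q a q' → ∃ p', ptr P p a p' ∧ R p' q')

/-- Modal refinement: the bisimulation preorder `⊑_B`. -/
noncomputable def refines (P : TSS Var A F ar) (p q : Tm Var F ar) : Prop :=
  ∃ R, IsBisim P R ∧ R p q

/-- Bisimulation equivalence `≡_B`, the kernel of `⊑_B`. -/
noncomputable def bisimEq (P : TSS Var A F ar) (p q : Tm Var F ar) : Prop :=
  refines P p q ∧ refines P q p

/-- `⟨S_X|S⟩`: the body `S X` with every bound variable `Y ∈ V` replaced by `⟨Y|S⟩`. -/
noncomputable def Tm.recUnfold (V : Set Var) (S : Var → Tm Var F ar) (X : Var) : Tm Var F ar :=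
  (S X).subst (fun z => if z ∈ V then .rcs V S z else .var z)

/-- The recursion rule `(⟨S_X|S⟩ →a z)/(⟨X|S⟩ →a z)`. -/
noncomputable def recRule (V : Set Var) (S : Var → Tm Var F ar) (X : Var) (a : A) (z : Var) :
    Rule Var A F ar :=
  ⟨{Lit.pos (Tm.recUnfold V S X) a (.var z)}, .rcs V S X, a, .var z⟩

def Rule.isRecRule (r : Rule Var A F ar) : Prop :=
  ∃ (V : Set Var) (S : Var → Tm Var F ar) (X : Var) (a : A) (z : Var),
    X ∈ V ∧ z ∉ (Tm.rcs V S X).fv ∧ r = recRule V S X a z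

/-- ntytt: right-hand sides of positive premises are distinct variables not occurring in the source. -/
def Rule.ntytt (r : Rule Var A F ar) : Prop :=
  (∀ l ∈ r.prem, ∀ t a u, l = Lit.pos t a u → ∃ y, u = Tm.var y ∧ y ∉ r.src.fv) ∧
  (∀ l₁ ∈ r.prem, ∀ l₂ ∈ r.prem, ∀ t₁ a₁ y₁ t₂ a₂ y₂,
    l₁ = Lit.pos t₁ a₁ (.var y₁) → l₂ = Lit.pos t₂ a₂ (.var y₂) → l₁ ≠ l₂ → y₁ ≠ y₂)

/-- ntyxt: the source is a variable. -/
def Rule.ntyxt (r : Rule Var A F ar) : Prop := ∃ x, r.src = Tm.var x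

/-- ntyft: the source is a function symbol applied to distinct variables. -/
def Rule.ntyft (r : Rule Var A F ar) : Prop :=
  ∃ (f : F) (xs : Fin (ar f) → Var), Function.Injective xs ∧
    r.src = Tm.app f (fun i => Tm.var (xs i))

def Rule.positive (r : Rule Var A F ar) : Prop :=
  ∀ l ∈ r.prem, ∃ t a u, l = Lit.pos t a u

def TSS.Positive (P : TSS Var A F ar) : Prop := ∀ r ∈ P.rules, r.positive

/-- A TSS is in the ntyft/ntyxt format with recursion. -/
def TSS.NtyftNtyxtRec (P : TSS Var A F ar) : Prop :=
  (∀ (V : Set Var) (S : Var → Tm Var F ar) (X : Var) (a : A), X ∈ V →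
    ∃ z, z ∉ (Tm.rcs V S X).fv ∧ recRule V S X a z ∈ P.rules) ∧
  (∀ r ∈ P.rules, r.isRecRule ∨ (r.ntytt ∧ (r.ntyxt ∨ r.ntyft)))

/-- A TSS is in the tyft/tyxt format with recursion. -/
def TSS.TyftTyxtRec (P : TSS Var A F ar) : Prop :=
  P.NtyftNtyxtRec ∧ P.Positive

/-- Operator-compatibility: congruence condition (1) for the operators of the signature. -/
def OpCompatible (le : Tm Var F ar → Tm Var F ar → Prop) : Prop :=
  ∀ (f : F) (ps qs : Fin (ar f) → Tm Var F ar),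
    (∀ i, le (ps i) (qs i)) → le (.app f ps) (.app f qs)

/-- A lean precongruence. -/
def LeanPrecong (le : Tm Var F ar → Tm Var F ar → Prop) : Prop :=
  ∀ (t : Tm Var F ar) (ρ ν : Var → Tm Var F ar),
    (∀ x, (ρ x).Closed) → (∀ x, (ν x).Closed) → (∀ x, le (ρ x) (ν x)) →
    le (t.subst ρ) (t.subst ν)

/-- A full precongruence. -/
def FullPrecong (le : Tm Var F ar → Tm Var F ar → Prop) : Prop :=
  OpCompatible le ∧
  ∀ (W : Set Var) (S S' : Var → Tm Var F ar) (X : Var), X ∈ W →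
    (∀ Y ∈ W, (S Y).fv ⊆ W) → (∀ Y ∈ W, (S' Y).fv ⊆ W) →
    (∀ σ : Var → Tm Var F ar, (∀ x, (σ x).Closed) →
      ∀ Y ∈ W, le ((S Y).subst σ) ((S' Y).subst σ)) →
    le (.rcs W S X) (.rcs W S' X)



/-- All closed negative literals with a well-supported proof. -/
noncomputable def Nall (P : TSS Var A F ar) : Set (Lit Var A F ar) :=
  {δ | δ.ClosedNeg ∧ WS P δ}

/-- Closed negative literals whose denial has no well-supported proof. -/
noncomputable def N0 (P : TSS Var A F ar) : Set (Lit Var A F ar) :=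
  {δ | ∃ s b, δ = Lit.neg s b ∧ s.Closed ∧ ¬ ∃ w, WS P (Lit.pos s b w)}

lemma N0_closedNeg (P : TSS Var A F ar) : ∀ δ ∈ N0 P, δ.ClosedNeg := by
  rintro δ ⟨s, b, rfl, hs, -⟩
  exact hs

lemma ws_closedPos {P : TSS Var A F ar} {t : Tm Var F ar} {a : A} {u : Tm Var F ar}
    (h : WS P (Lit.pos t a u)) : (Lit.pos t a u).ClosedPos := by
  cases h with
  | pos r σ hr hcp _ _ => exact hcp

/-- Lemma A: a positive literal with a well-supported proof is provable from `Nall`. -/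
lemma lemA {P : TSS Var A F ar} {l : Lit Var A F ar} (h : WS P l) :
    l.ClosedPos → Proves P (Nall P) l := by
  induction h with
  | pos r σ hr hcp hclos hws ih =>
    intro _
    refine Proves.rule r σ hr ?_
    intro β hβ
    cases hβs : β.subst σ with
    | pos t b u =>
      have := ih β hβ
      rw [hβs] at this
      have hc := hclos β hβ
      rw [hβs] at hc
      rcases hc with hc | hc
      · exact this hc
      · exact absurd hc (by simp [Lit.ClosedNeg])
    | neg t b =>
      refine Proves.hyp ?_
      have hc := hclos β hβ
      rw [hβs] at hc
      have hcn : (Lit.neg t b : Lit Var A F ar).ClosedNeg := by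
        rcases hc with hc | hc
        · exact absurd hc (by simp [Lit.ClosedPos])
        · exact hc
      have hw := hws β hβ
      rw [hβs] at hw
      exact ⟨hcn, hw⟩
  | neg t a K hcl hKcl hKws hcond ih =>
    intro hcp
    exact absurd hcp (by simp [Lit.ClosedPos])

/-- The consistency invariant. -/
noncomputable def ConWS (P : TSS Var A F ar) : Lit Var A F ar → Prop
  | .pos t a u => (Lit.pos t a u : Lit Var A F ar).ClosedPos ∧
      Proves P (N0 P) (Lit.pos t a u)
  | .neg t a => ¬ ∃ u, WS P (Lit.pos t a u)

lemma ws_con {P : TSS Var A F ar} {l : Lit Var A F ar} (h : WS P l) : ConWS P l := by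
  induction h with
  | pos r σ hr hcp hclos hws ih =>
    refine ⟨hcp, ?_⟩
    refine Proves.rule r σ hr ?_
    intro β hβ
    have hc := hclos β hβ
    have hi := ih β hβ
    cases hβs : β.subst σ with
    | pos t b u =>
      rw [hβs] at hi
      exact hi.2
    | neg t b =>
      refine Proves.hyp ?_
      have hcn : t.Closed := by
        rw [hβs] at hc
        rcases hc with hc | hc
        · exact absurd hc (by simp [Lit.ClosedPos])
        · exact hc
      rw [hβs] at hi
      exact ⟨t, b, rfl, hcn, hi⟩
  | neg t a K hcl hKcl hKws hcond ih =>
    rintro ⟨u, hu⟩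
    have hpr : Proves P (Nall P) (Lit.pos t a u) := lemA hu (ws_closedPos hu)
    have hNallcn : ∀ δ ∈ Nall P, δ.ClosedNeg := fun δ hδ => hδ.1
    obtain ⟨β, hβK, δ, hδ, hdeny⟩ :=
      hcond (Nall P) hNallcn (Lit.pos t a u) (ws_closedPos hu) ⟨rfl, rfl⟩ hpr
    obtain ⟨hδcn, hδws⟩ := hδ
    cases δ with
    | pos _ _ _ => exact absurd hδcn (by simp [Lit.ClosedNeg])
    | neg s b =>
      cases β with
      | neg _ _ => exact absurd hdeny (by simp [Lit.deny])
      | pos s' b' w =>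
        obtain ⟨rfl, rfl⟩ : s' = s ∧ b' = b := hdeny
        have hβcon := ih _ hβK
        obtain ⟨hβcp, hβpr⟩ := hβcon
        cases hδws with
        | neg t' a' K' hcl' hKcl' hKws' hcond' =>
          obtain ⟨β', hβ'K, δ', hδ', hdeny'⟩ :=
            hcond' (N0 P) (N0_closedNeg P) (Lit.pos _ _ w) hβcp ⟨rfl, rfl⟩ hβpr
          obtain ⟨s2, b2, rfl, hs2, hno⟩ := hδ'
          cases β' with
          | neg _ _ => exact absurd hdeny' (by simp [Lit.deny])
          | pos s3 b3 w3 =>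
            obtain ⟨rfl, rfl⟩ : s3 = s2 ∧ b3 = b2 := hdeny'
            exact hno ⟨w3, hKws' _ hβ'K⟩

/-- consistency of well-supported provability. -/
theorem stmt5 (P : TSS Var A F ar) (p : Tm Var F ar) (a : A) :
    ¬ ((∃ q, WS P (Lit.pos p a q)) ∧ WS P (Lit.neg p a)) := by
  rintro ⟨⟨q, hq⟩, hn⟩
  exact (ws_con hn) ⟨q, hq⟩
end

section
/- If a TSS P is complete—i.e., for each closed term p and action a, either P ⊢_ws p ↛a or P ⊢_ws p →a q for some q—then CT⁻ = PT⁻ and CT⁺ = PT⁺, i.e., the 3-valued transition relation of the well-founded semantics is 2-valued. -/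
open Classical
attribute [local instance] Classical.propDecidable

universe u

variable {Var A F : Type} {ar : F → ℕ}

/-! Every literal with a well-supported proof is certain: positive ones are proved from `CT⁻`,
and a negative one cannot be denied by a possible transition, since the well-supported proof
forces any proof of that transition from `PT⁻` to use a hypothesis contradicting `CT⁺`.
Completeness therefore puts every literal of `PT⁻` into `CT⁻`, while `CT⁻ ⊆ PT⁻` holds in general
because `CT⁺ ⊆ PT⁺`. Finally `CT⁺` and `PT⁺` are the consequences of `CT⁻` and `PT⁻`. -/

theorem Lit.deny_comm {β δ : Lit Var A F ar} : β.deny δ ↔ δ.deny β := by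
  cases β <;> cases δ <;> simp only [Lit.deny]

theorem Lit.not_deny_of_closedNeg {β δ : Lit Var A F ar} (hβ : β.ClosedNeg) (hδ : δ.ClosedNeg) :
    ¬ β.deny δ := by
  cases β <;> cases δ <;> simp_all [Lit.ClosedNeg, Lit.deny]

theorem Proves.mono {P : TSS Var A F ar} {H H' : Set (Lit Var A F ar)} (hH : H ⊆ H')
    {α : Lit Var A F ar} (h : Proves P H α) : Proves P H' α := by
  induction h with
  | hyp hα => exact .hyp (hH hα)
  | rule r σ hr _ ih => exact .rule r σ hr ih

section WellFoundedSemantics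

variable (P : TSS Var A F ar)

theorem CTp_eq (l : Ordinal) : CTp P l = {β | β.ClosedPos ∧ Proves P (CTm P l) β} := by
  rw [CTp]; rfl

/- The recursion goes from `(μ, l)` to `(κ, μ)` with `κ < l`, which decreases
`(max μ l, min μ l)` lexicographically. -/
theorem CTp_subset_PTp (μ l : Ordinal.{u}) : CTp P μ ⊆ PTp P l := by
  intro β hβ
  rw [CTp_eq] at hβ
  refine ⟨hβ.1, hβ.2.mono fun δ hδ => ?_⟩
  exact ⟨hδ.1, fun κ hκ γ hγ => hδ.2 γ (CTp_subset_PTp κ μ hγ)⟩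
termination_by (max μ l, min μ l)
decreasing_by
  rcases lt_or_ge μ l with hμl | hlμ
  · exact Prod.Lex.left _ _ (by rw [max_eq_right hμl.le]; exact max_lt hκ hμl)
  · rw [max_eq_left hlμ, max_eq_right (hκ.le.trans hlμ), min_eq_right hlμ,
      min_eq_left (hκ.le.trans hlμ)]
    exact Prod.Lex.right _ hκ

theorem ctPos_subset_ptPos : ctPos P ⊆ ptPos P := fun _ hβ =>
  let ⟨μ, hμ⟩ := Set.mem_iUnion.1 hβ
  Set.mem_iInter.2 fun l => CTp_subset_PTp P μ l hμ

theorem ptNeg_eq : ptNeg P = {δ | δ.ClosedNeg ∧ ∀ γ ∈ ctPos P, ¬ δ.deny γ} := by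
  ext δ
  simp only [ptNeg, ctPos, PTm, Set.mem_iInter, Set.mem_iUnion, Set.mem_ofPred_eq]
  constructor
  · intro h
    refine ⟨(h 0).1, fun γ ⟨κ, hγ⟩ => (h (Order.succ κ)).2 κ (Order.lt_succ κ) γ hγ⟩
  · exact fun ⟨hδ, h⟩ l => ⟨hδ, fun κ _ γ hγ => h γ ⟨κ, hγ⟩⟩

theorem exists_PTm_eq_ptNeg : ∃ l : Ordinal.{0}, PTm P l = ptNeg P := by
  choose μ hμ using fun γ : ctPos P => Set.mem_iUnion.1 γ.2
  refine ⟨⨆ γ, μ γ + 1, subset_antisymm ?_ (Set.iInter_subset _ _)⟩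
  rw [ptNeg_eq]
  exact fun δ hδ => ⟨hδ.1, fun γ hγ =>
    hδ.2 (μ ⟨γ, hγ⟩) (Ordinal.lt_iSup_add_one μ ⟨γ, hγ⟩) γ (hμ ⟨γ, hγ⟩)⟩

theorem ptPos_eq : ptPos P = {β | β.ClosedPos ∧ Proves P (ptNeg P) β} := by
  obtain ⟨l, hl⟩ := exists_PTm_eq_ptNeg P
  refine subset_antisymm (fun β hβ => ?_) fun β hβ => Set.mem_iInter.2 fun l' => ?_
  · have hβl : β ∈ PTp P l := Set.mem_iInter.1 hβ l
    exact ⟨hβl.1, hl ▸ hβl.2⟩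
  · exact ⟨hβ.1, hβ.2.mono (Set.iInter_subset _ l')⟩

theorem exists_PTp_eq_ptPos : ∃ l : Ordinal.{0}, PTp P l = ptPos P := by
  obtain ⟨l, hl⟩ := exists_PTm_eq_ptNeg P
  exact ⟨l, by rw [ptPos_eq, PTp, hl]⟩

theorem ctNeg_eq : ctNeg P = {δ | δ.ClosedNeg ∧ ∀ γ ∈ ptPos P, ¬ δ.deny γ} := by
  obtain ⟨l, hl⟩ := exists_PTp_eq_ptPos P
  refine subset_antisymm (fun δ hδ => ?_) fun δ hδ =>
    Set.mem_iUnion.2 ⟨l, by rw [CTm, hl]; exact hδ⟩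
  obtain ⟨l', hδ⟩ := Set.mem_iUnion.1 hδ
  exact ⟨hδ.1, fun γ hγ => hδ.2 γ (Set.mem_iInter.1 hγ l')⟩

theorem ctPos_eq : ctPos P = {β | β.ClosedPos ∧ Proves P (ctNeg P) β} := by
  obtain ⟨l, hl⟩ := exists_PTp_eq_ptPos P
  have hCTm : CTm P l = ctNeg P := by rw [ctNeg_eq, CTm, hl]
  refine subset_antisymm (fun β hβ => ?_) fun β hβ => Set.mem_iUnion.2 ⟨l, ?_⟩
  · obtain ⟨l', hβ⟩ := Set.mem_iUnion.1 hβ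
    rw [CTp_eq] at hβ
    exact ⟨hβ.1, hβ.2.mono (Set.subset_iUnion (CTm P) l')⟩
  · rw [CTp_eq, hCTm]
    exact hβ

theorem ctNeg_subset_ptNeg : ctNeg P ⊆ ptNeg P := by
  rw [ctNeg_eq, ptNeg_eq]
  exact fun δ hδ => ⟨hδ.1, fun γ hγ => hδ.2 γ (ctPos_subset_ptPos P hγ)⟩

end WellFoundedSemantics

theorem WS.mem_ctPos_union_ctNeg {P : TSS Var A F ar} {α : Lit Var A F ar} (h : WS P α) :
    α ∈ ctPos P ∪ ctNeg P := by
  induction h with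
  | pos r σ hr hcl _ _ ih =>
    refine Or.inl ?_
    rw [ctPos_eq]
    refine ⟨hcl, .rule r σ hr fun β hβ => ?_⟩
    rcases ih β hβ with hpos | hneg
    · exact ((ctPos_eq P).subset hpos).2
    · exact .hyp hneg
  | neg t a K ht _ _ hsupp ih =>
    refine Or.inr ?_
    rw [ctNeg_eq]
    refine ⟨ht, fun γ hγ hdeny => ?_⟩
    rw [ptPos_eq] at hγ
    have hptNeg : ∀ δ ∈ ptNeg P, δ.ClosedNeg := fun δ hδ => ((ptNeg_eq P).subset hδ).1
    obtain ⟨β, hβK, δ, hδ, hβδ⟩ := hsupp _ hptNeg γ hγ.1 (Lit.deny_comm.1 hdeny) hγ.2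
    rcases ih β hβK with hβ | hβ
    · exact ((ptNeg_eq P).subset hδ).2 β hβ (Lit.deny_comm.1 hβδ)
    · exact Lit.not_deny_of_closedNeg ((ctNeg_eq P).subset hβ).1 (hptNeg δ hδ) hβδ

/-- a complete TSS has a 2-valued well-founded semantics. -/
theorem stmt6 (P : TSS Var A F ar)
    (hcomplete : ∀ p : Tm Var F ar, p.Closed → ∀ a : A,
      WS P (Lit.neg p a) ∨ ∃ q, WS P (Lit.pos p a q)) :
    ctNeg P = ptNeg P ∧ ctPos P = ptPos P := by
  have hneg : ctNeg P = ptNeg P := by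
    refine subset_antisymm (ctNeg_subset_ptNeg P) fun δ hδ => ?_
    rw [ptNeg_eq] at hδ
    obtain ⟨hcl, hδ⟩ := hδ
    cases δ with
    | pos => exact hcl.elim
    | neg p a =>
      rcases hcomplete p hcl a with hws | ⟨q, hws⟩
      · exact hws.mem_ctPos_union_ctNeg.resolve_left fun h => ((ctPos_eq P).subset h).1
      · have hq := hws.mem_ctPos_union_ctNeg.resolve_right fun h => ((ctNeg_eq P).subset h).1
        exact (hδ _ hq ⟨rfl, rfl⟩).elim
  exact ⟨hneg, by rw [ctPos_eq, ptPos_eq, hneg]⟩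
end
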